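/- Let s, t ∈ ℝ⁴ be nonnegative and u, u', u'' ∈ ℂ⁴, s', t', s'', t'' nonnegative with (s,t,u) = (s',t',u') + (s'',t'',u''). Suppose √(sᵢtᵢ) = |uₖ|, sⱼ = tⱼ = 0, {k,ℓ} = {i,j}, and both summands satisfy √(s'ᵢt'ᵢ) + √(s'ⱼt'ⱼ) ≥ |u'ₖ| + |u'ₗ| and similarly for the double-primed triple. Then s'ⱼ = t'ⱼ = s''ⱼ = t''ⱼ = 0, u'ₗ = u''ₗ = 0, and (s'ᵢ, t'ᵢ, u'ₖ) is parallel to (s''ᵢ, t''ᵢ, u''ₖ) (one is a nonnegative multiple of the other). -/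

import Mathlib

/-!
Adding the two witness inequalities and comparing with the saturated one through the triangle
inequality `‖u'ₖ + u''ₖ‖ ≤ ‖u'ₖ‖ + ‖u''ₖ‖` and the Cauchy–Schwarz inequality
`√(s'ᵢt'ᵢ) + √(s''ᵢt''ᵢ) ≤ √(sᵢtᵢ)` forces equality everywhere. This kills `u'ₗ` and `u''ₗ`,
gives `s'ᵢt''ᵢ = s''ᵢt'ᵢ` (the Cauchy–Schwarz defect is `(√(s'ᵢt''ᵢ) - √(s''ᵢt'ᵢ))²`), puts
`u'ₖ, u''ₖ` on a common ray (strict convexity of `ℂ`), and `‖u'ₖ‖² = s'ᵢt'ᵢ` fixes the ratio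
along that ray to be the ratio of the `s`- and `t`-coordinates.
-/

open Real

section CauchySchwarz

variable {a b c d : ℝ}

theorem add_mul_add_eq_sq_sqrt_add_sq_sqrt_sub (ha : 0 ≤ a) (hb : 0 ≤ b) (hc : 0 ≤ c)
    (hd : 0 ≤ d) :
    (a + b) * (c + d) = (√(a * c) + √(b * d)) ^ 2 + (√(a * d) - √(b * c)) ^ 2 := by
  have hcross : √(a * c) * √(b * d) = √(a * d) * √(b * c) := by
    rw [← sqrt_mul (by positivity), ← sqrt_mul (by positivity)]
    ring_nf
  rw [add_sq, sub_sq, sq_sqrt (by positivity), sq_sqrt (by positivity), sq_sqrt (by positivity),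
    sq_sqrt (by positivity), mul_assoc 2, hcross]
  ring

theorem sqrt_mul_add_sqrt_mul_le (ha : 0 ≤ a) (hb : 0 ≤ b) (hc : 0 ≤ c) (hd : 0 ≤ d) :
    √(a * c) + √(b * d) ≤ √((a + b) * (c + d)) := by
  rw [le_sqrt (by positivity) (by positivity), add_mul_add_eq_sq_sqrt_add_sq_sqrt_sub ha hb hc hd]
  exact le_add_of_nonneg_right (sq_nonneg _)

theorem mul_eq_mul_of_sqrt_add_mul_add_le (ha : 0 ≤ a) (hb : 0 ≤ b) (hc : 0 ≤ c) (hd : 0 ≤ d)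
    (h : √((a + b) * (c + d)) ≤ √(a * c) + √(b * d)) : a * d = b * c := by
  rw [sqrt_le_left (by positivity), add_mul_add_eq_sq_sqrt_add_sq_sqrt_sub ha hb hc hd] at h
  have hsqrt : √(a * d) = √(b * c) := by nlinarith [sq_nonneg (√(a * d) - √(b * c))]
  rwa [sqrt_inj (by positivity) (by positivity)] at hsqrt

end CauchySchwarz

section Rigidity

variable {E : Type*} [NormedAddCommGroup E] [NormedSpace ℝ E] {a b c d : ℝ} {z w : E}

theorem exists_nonneg_eq_smul_of_sameRay (ha : 0 ≤ a) (hb : 0 < b) (hdet : a * d = b * c)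
    (hz : ‖z‖ ^ 2 = a * c) (hw : ‖w‖ ^ 2 = b * d) (hzw : SameRay ℝ z w) :
    ∃ r : ℝ, 0 ≤ r ∧ a = r * b ∧ c = r * d ∧ z = r • w := by
  have hc : c = a / b * d := by field_simp; linarith
  refine ⟨a / b, by positivity, (div_mul_cancel₀ a hb.ne').symm, hc, ?_⟩
  rcases eq_or_ne w 0 with rfl | hw0
  · have hd : d = 0 := by simpa [hb.ne'] using hw.symm
    simpa [hc, hd] using hz
  obtain ⟨ρ, hρ, rfl⟩ := hzw.exists_nonneg_right hw0
  have hd : 0 < d := pos_of_mul_pos_right (hw ▸ pow_pos (norm_pos_iff.mpr hw0) 2) hb.le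
  rw [norm_smul, mul_pow, hw, norm_of_nonneg hρ] at hz
  have hρb : (ρ * b) ^ 2 = a ^ 2 := by
    refine mul_right_cancel₀ hd.ne' ?_
    linear_combination b * hz - a * hdet
  rw [sq_eq_sq₀ (by positivity) ha] at hρb
  rw [← hρb, mul_div_cancel_right₀ ρ hb.ne']

theorem exists_nonneg_smul_of_sameRay (ha : 0 ≤ a) (hb : 0 ≤ b) (hc : 0 ≤ c) (hd : 0 ≤ d)
    (hdet : a * d = b * c) (hz : ‖z‖ ^ 2 = a * c) (hw : ‖w‖ ^ 2 = b * d) (hzw : SameRay ℝ z w) :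
    ∃ r : ℝ, 0 ≤ r ∧
      ((a = r * b ∧ c = r * d ∧ z = r • w) ∨ (b = r * a ∧ d = r * c ∧ w = r • z)) := by
  rcases hb.lt_or_eq with hb | rfl
  · obtain ⟨r, hr, h⟩ := exists_nonneg_eq_smul_of_sameRay ha hb hdet hz hw hzw
    exact ⟨r, hr, Or.inl h⟩
  rcases hd.lt_or_eq with hd | rfl
  · obtain ⟨r, hr, hcd, hab, hzw⟩ := exists_nonneg_eq_smul_of_sameRay hc hd
      (show c * 0 = d * a by linarith) (by rw [hz, mul_comm]) (by rw [hw, mul_comm]) hzw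
    exact ⟨r, hr, Or.inl ⟨hab, hcd, hzw⟩⟩
  have hw0 : w = 0 := by simpa using hw
  exact ⟨0, le_rfl, Or.inr ⟨by simp, by simp, by simp [hw0]⟩⟩

theorem exists_nonneg_smul_of_sqrt_add_mul_add_le_norm_add [StrictConvexSpace ℝ E]
    (ha : 0 ≤ a) (hb : 0 ≤ b) (hc : 0 ≤ c) (hd : 0 ≤ d)
    (hz : ‖z‖ ≤ √(a * c)) (hw : ‖w‖ ≤ √(b * d)) (h : √((a + b) * (c + d)) ≤ ‖z + w‖) :
    ∃ r : ℝ, 0 ≤ r ∧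
      ((a = r * b ∧ c = r * d ∧ z = r • w) ∨ (b = r * a ∧ d = r * c ∧ w = r • z)) := by
  have hCS := sqrt_mul_add_sqrt_mul_le ha hb hc hd
  have htri := norm_add_le z w
  have hz' : ‖z‖ = √(a * c) := by linarith
  have hw' : ‖w‖ = √(b * d) := by linarith
  exact exists_nonneg_smul_of_sameRay ha hb hc hd
    (mul_eq_mul_of_sqrt_add_mul_add_le ha hb hc hd (by linarith))
    (by rw [hz', sq_sqrt (by positivity)]) (by rw [hw', sq_sqrt (by positivity)])
    (sameRay_iff_norm_add.mpr (by linarith))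

end Rigidity

theorem witness_CS_rigidity_general (s t s' t' s'' t'' : Fin 4 → ℝ) (u u' u'' : Fin 4 → ℂ)
    (i j k l : Fin 4)
    (hs' : ∀ m, 0 ≤ s' m) (ht' : ∀ m, 0 ≤ t' m)
    (hs'' : ∀ m, 0 ≤ s'' m) (ht'' : ∀ m, 0 ≤ t'' m)
    (hsum : s = s' + s'' ∧ t = t' + t'' ∧ u = u' + u'')
    (hsat : Real.sqrt (s i * t i) = ‖u k‖)
    (hsj : s j = 0) (htj : t j = 0)
    (hW' : Real.sqrt (s' i * t' i) + Real.sqrt (s' j * t' j) ≥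
      ‖u' k‖ + ‖u' l‖)
    (hW'' : Real.sqrt (s'' i * t'' i) + Real.sqrt (s'' j * t'' j) ≥
      ‖u'' k‖ + ‖u'' l‖) :
    (s' j = 0 ∧ t' j = 0 ∧ s'' j = 0 ∧ t'' j = 0) ∧
    (u' l = 0 ∧ u'' l = 0) ∧
    (∃ c : ℝ, 0 ≤ c ∧
      ((s' i = c * s'' i ∧ t' i = c * t'' i ∧ u' k = (c : ℂ) * u'' k) ∨
       (s'' i = c * s' i ∧ t'' i = c * t' i ∧ u'' k = (c : ℂ) * u' k))) := by
  obtain ⟨rfl, rfl, rfl⟩ := hsum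
  simp only [Pi.add_apply] at hsat hsj htj
  have hs'j : s' j = 0 := by linarith [hs' j, hs'' j]
  have ht'j : t' j = 0 := by linarith [ht' j, ht'' j]
  have hs''j : s'' j = 0 := by linarith [hs' j, hs'' j]
  have ht''j : t'' j = 0 := by linarith [ht' j, ht'' j]
  simp only [hs'j, hs''j, zero_mul, sqrt_zero, add_zero] at hW' hW''
  have hCS := sqrt_mul_add_sqrt_mul_le (hs' i) (hs'' i) (ht' i) (ht'' i)
  have htri := norm_add_le (u' k) (u'' k)
  have hl' := norm_nonneg (u' l)
  have hl'' := norm_nonneg (u'' l)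
  refine ⟨⟨hs'j, ht'j, hs''j, ht''j⟩,
    ⟨norm_le_zero_iff.mp (by linarith), norm_le_zero_iff.mp (by linarith)⟩, ?_⟩
  simpa only [Complex.real_smul] using exists_nonneg_smul_of_sqrt_add_mul_add_le_norm_add
    (hs' i) (hs'' i) (ht' i) (ht'' i) (by linarith) (by linarith) hsat.le

theorem witness_CS_rigidity (s t s' t' s'' t'' : Fin 4 → ℝ) (u u' u'' : Fin 4 → ℂ)
    (i j k l : Fin 4) (hij : i ≠ j)
    (hkl : (k = i ∧ l = j) ∨ (k = j ∧ l = i))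
    (hs : ∀ m, 0 ≤ s m) (ht : ∀ m, 0 ≤ t m)
    (hs' : ∀ m, 0 ≤ s' m) (ht' : ∀ m, 0 ≤ t' m)
    (hs'' : ∀ m, 0 ≤ s'' m) (ht'' : ∀ m, 0 ≤ t'' m)
    (hsum : s = s' + s'' ∧ t = t' + t'' ∧ u = u' + u'')
    (hsat : Real.sqrt (s i * t i) = ‖u k‖)
    (hsj : s j = 0) (htj : t j = 0)
    (hW' : Real.sqrt (s' i * t' i) + Real.sqrt (s' j * t' j) ≥
      ‖u' k‖ + ‖u' l‖)
    (hW'' : Real.sqrt (s'' i * t'' i) + Real.sqrt (s'' j * t'' j) ≥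
      ‖u'' k‖ + ‖u'' l‖) :
    (s' j = 0 ∧ t' j = 0 ∧ s'' j = 0 ∧ t'' j = 0) ∧
    (u' l = 0 ∧ u'' l = 0) ∧
    (∃ c : ℝ, 0 ≤ c ∧
      ((s' i = c * s'' i ∧ t' i = c * t'' i ∧ u' k = (c : ℂ) * u'' k) ∨
       (s'' i = c * s' i ∧ t'' i = c * t' i ∧ u'' k = (c : ℂ) * u' k))) :=
  witness_CS_rigidity_general s t s' t' s'' t'' u u' u'' i j k l hs' ht' hs'' ht'' hsum hsat hsj htj
    hW' hW''
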